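/- Let r ≥ 3 be an integer, let n > r + 1 be an integer, and define the positive real number q by n = q² + q + r - 1. If P is a clique partition of the r-element subsets of [n] with |P| = C(n, r)/C(q + r - 1, r), then q is a positive integer and every member of P has exactly q + r - 1 elements (so P is a Steiner (n, q+r-1, r)-system). -/

import Mathlib

/-- A clique partition of the `r`-element subsets of `[n]`: a collection of
proper subsets of `[n]` such that every `r`-element subset is contained in
exactly one member. -/
def IsCliquePartition (n r : ℕ) (P : Finset (Finset (Fin n))) : Prop :=
  (∀ A ∈ P, A ≠ Finset.univ) ∧
  ∀ S : Finset (Fin n), S.card = r → ∃! A, A ∈ P ∧ S ⊆ A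

/-- `cp n r` is the minimum size of a clique partition of the `r`-subsets of `[n]`. -/
noncomputable def cp (n r : ℕ) : ℕ :=
  sInf {t | ∃ P : Finset (Finset (Fin n)), IsCliquePartition n r P ∧ P.card = t}

/-- Generalized binomial coefficient `C(x, r) = x(x-1)⋯(x-r+1)/r!` for real `x`. -/
noncomputable def rbinom (x : ℝ) (r : ℕ) : ℝ :=
  (∏ i ∈ Finset.range r, (x - i)) / (Nat.factorial r)

/-!
Write `k = q + r - 1`. By induction on `r ≥ 2`, every clique partition `P` of the `r`-subsets of
a set `G` with `|G| = q² + q + r - 1` satisfies `C(|G|, r) ≤ |P| C(k, r)`. For `r = 2` this is the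
de Bruijn–Erdős bound `|P| ≥ |G|`. For larger `r`, the links of the points of `G` are clique
partitions one level down, so the induction hypothesis bounds `∑_{A ∈ P} |A|` from below; on the
other hand `∑_{A ∈ P} C(|A|, r) = C(|G|, r)`, and each `C(|A|, r)` is at least the value at `|A|`
of the tangent line at `k` of the convex function `x ↦ C(x, r)`. Combining the two bounds gives the
inequality, and since the tangent line lies strictly below `C(a, r)` at every integer `a ≠ k`,
equality forces `|A| = k` for every `A ∈ P`.
-/

open Finset

theorem rbinom_natCast (m s : ℕ) : rbinom m s = m.choose s := by
  rw [rbinom, ← descPochhammer_eval_eq_prod_range, Nat.cast_choose_eq_descPochhammer_div]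

theorem sub_pos_of_mem_range {k : ℝ} {s i : ℕ} (hk : (s : ℝ) - 1 < k) (hi : i ∈ range s) :
    0 < k - i := by
  have : (i : ℝ) + 1 ≤ s := by exact_mod_cast mem_range.1 hi
  linarith

theorem rbinom_pos {k : ℝ} {s : ℕ} (hk : (s : ℝ) - 1 < k) : 0 < rbinom k s :=
  div_pos (prod_pos fun _ hi ↦ sub_pos_of_mem_range hk hi) (by positivity)

theorem rbinom_succ_mul (k : ℝ) (s : ℕ) : rbinom k (s + 1) * (s + 1) = k * rbinom (k - 1) s := by
  rw [rbinom, rbinom, prod_range_succ', Nat.factorial_succ]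
  push_cast
  field_simp
  simp_rw [sub_sub, add_comm (1 : ℝ)]
  ring

theorem rbinom_two (x : ℝ) : rbinom x 2 = x * (x - 1) / 2 := by
  simp [rbinom, prod_range_succ]

/-- Weierstrass product inequality. -/
theorem one_add_sum_le_prod_one_add {ι : Type*} (s : Finset ι) {u : ι → ℝ}
    (h₁ : ∀ i ∈ s, -1 ≤ u i) (h₂ : ∀ i ∈ s, ∀ j ∈ s, 0 ≤ u i * u j) :
    1 + ∑ i ∈ s, u i ≤ ∏ i ∈ s, (1 + u i) := by
  classical
  induction s using Finset.induction_on with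
  | empty => simp
  | insert a s ha ih =>
    rw [sum_insert ha, prod_insert ha]
    have hs := ih (fun i hi ↦ h₁ i (mem_insert_of_mem hi))
      fun i hi j hj ↦ h₂ i (mem_insert_of_mem hi) j (mem_insert_of_mem hj)
    have hcross : 0 ≤ u a * ∑ i ∈ s, u i := by
      rw [mul_sum]
      exact sum_nonneg fun i hi ↦ h₂ a (mem_insert_self a s) i (mem_insert_of_mem hi)
    have ha₁ : 0 ≤ 1 + u a := by linarith [h₁ a (mem_insert_self a s)]
    nlinarith [mul_le_mul_of_nonneg_left hs ha₁]

theorem one_add_sum_lt_prod_one_add {ι : Type*} (s : Finset ι) (hs : 1 < #s) {u : ι → ℝ}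
    (h₁ : ∀ i ∈ s, -1 ≤ u i) (h₂ : ∀ i ∈ s, ∀ j ∈ s, 0 ≤ u i * u j) (h₀ : ∀ i ∈ s, u i ≠ 0) :
    1 + ∑ i ∈ s, u i < ∏ i ∈ s, (1 + u i) := by
  classical
  obtain ⟨a, ha⟩ := card_pos.1 (by omega : 0 < #s)
  have hsub : s.erase a ⊆ s := erase_subset a s
  rw [← insert_erase ha, sum_insert (notMem_erase a s), prod_insert (notMem_erase a s)]
  have hrest := one_add_sum_le_prod_one_add (s.erase a) (fun i hi ↦ h₁ i (hsub hi))
    fun i hi j hj ↦ h₂ i (hsub hi) j (hsub hj)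
  have hcross : 0 < u a * ∑ i ∈ s.erase a, u i := by
    rw [mul_sum]
    refine sum_pos (fun i hi ↦ (h₂ a ha i (hsub hi)).lt_of_ne ?_) ?_
    · exact (mul_ne_zero (h₀ a ha) (h₀ i (hsub hi))).symm
    · exact card_pos.1 (by rw [card_erase_of_mem ha]; omega)
  have ha₁ : 0 ≤ 1 + u a := by linarith [h₁ a ha]
  nlinarith [mul_le_mul_of_nonneg_left hrest ha₁]

/-- The logarithmic derivative of `x ↦ C(x, s)` at `k`. -/
noncomputable def rbinomLogDeriv (k : ℝ) (s : ℕ) : ℝ := ∑ i ∈ range s, (k - i)⁻¹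

noncomputable def rbinomTangent (k : ℝ) (s : ℕ) (x : ℝ) : ℝ :=
  rbinom k s * (1 + rbinomLogDeriv k s * (x - k))

theorem rbinomTangent_self (k : ℝ) (s : ℕ) : rbinomTangent k s k = rbinom k s := by
  simp [rbinomTangent]

theorem one_lt_rbinomLogDeriv_mul {k : ℝ} {s : ℕ} (hs : 2 ≤ s) (hk : (s : ℝ) - 1 < k) :
    1 < rbinomLogDeriv k s * k := by
  have hterm : ∀ i ∈ range s, 1 ≤ (k - i)⁻¹ * k := by
    intro i hi
    have hpos := sub_pos_of_mem_range hk hi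
    rw [inv_mul_eq_div, le_div_iff₀ hpos]
    linarith [(Nat.cast_nonneg i : (0 : ℝ) ≤ i)]
  have := card_nsmul_le_sum _ _ _ hterm
  rw [card_range, nsmul_eq_mul, mul_one] at this
  rw [rbinomLogDeriv, sum_mul]
  exact lt_of_lt_of_le (by exact_mod_cast hs) this

/-- Strict convexity of `x ↦ C(x, s)` on `[s - 1, ∞)`, in tangent-line form. -/
theorem rbinomTangent_lt_rbinom {k x : ℝ} {s : ℕ} (hs : 2 ≤ s) (hk : (s : ℝ) - 1 < k)
    (hx : (s : ℝ) - 1 ≤ x) (hxk : x ≠ k) : rbinomTangent k s x < rbinom x s := by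
  have hpos : ∀ i ∈ range s, 0 < k - i := fun i hi ↦ sub_pos_of_mem_range hk hi
  set u : ℕ → ℝ := fun i ↦ (x - k) / (k - i)
  have hfactor : ∀ i ∈ range s, (k - i) * (1 + u i) = x - i := by
    intro i hi
    simp only [u]
    field_simp [(hpos i hi).ne']
    ring
  have hweier : 1 + ∑ i ∈ range s, u i < ∏ i ∈ range s, (1 + u i) := by
    refine one_add_sum_lt_prod_one_add _ (by rw [card_range]; omega) (fun i hi ↦ ?_)
      (fun i hi j hj ↦ ?_) fun i hi ↦ div_ne_zero (sub_ne_zero.2 hxk) (hpos i hi).ne'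
    · have : (i : ℝ) + 1 ≤ s := by exact_mod_cast mem_range.1 hi
      rw [le_div_iff₀ (hpos i hi)]
      linarith
    · have := mul_pos (hpos i hi) (hpos j hj)
      simp only [u, div_mul_div_comm, ← sq]
      positivity
  have hsum : rbinomLogDeriv k s * (x - k) = ∑ i ∈ range s, u i := by
    rw [rbinomLogDeriv, sum_mul]
    exact sum_congr rfl fun i _ ↦ by simp only [u]; ring
  rw [rbinomTangent, hsum, rbinom, rbinom, ← prod_congr rfl hfactor, prod_mul_distrib,
    div_mul_eq_mul_div]
  gcongr
  exact prod_pos hpos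

theorem rbinomTangent_neg {k x : ℝ} {s : ℕ} (hs : 2 ≤ s) (hk : (s : ℝ) - 1 < k)
    (hx : x ≤ (s : ℝ) - 1) : rbinomTangent k s x < 0 := by
  have hpos : ∀ i ∈ range s, 0 < k - i := fun i hi ↦ sub_pos_of_mem_range hk hi
  have hlast : s - 1 ∈ range s := mem_range.2 (by omega)
  have hterm : ∀ i ∈ range s, 0 ≤ (k - i)⁻¹ * (k - x) := fun i hi ↦
    mul_nonneg (inv_pos.2 (hpos i hi)).le (by linarith)
  have hone : 1 ≤ (k - ↑(s - 1))⁻¹ * (k - x) := by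
    rw [inv_mul_eq_div, le_div_iff₀ (hpos _ hlast), Nat.cast_sub (by omega)]
    push_cast
    linarith
  have hzero : 0 < (k - ↑(0 : ℕ))⁻¹ * (k - x) :=
    mul_pos (inv_pos.2 (hpos 0 (mem_range.2 (by omega)))) (by linarith)
  have hgt : 1 < rbinomLogDeriv k s * (k - x) := by
    rw [rbinomLogDeriv, sum_mul]
    calc (1 : ℝ) < (k - ↑(s - 1))⁻¹ * (k - x) + (k - ↑(0 : ℕ))⁻¹ * (k - x) := by linarith
      _ ≤ _ := add_le_sum hterm hlast (mem_range.2 (by omega)) (by omega)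
  have : 1 + rbinomLogDeriv k s * (x - k) < 0 := by linarith [show x - k = -(k - x) by ring]
  exact mul_neg_of_pos_of_neg (rbinom_pos hk) this

theorem rbinomTangent_lt_choose {k : ℝ} {s : ℕ} (hs : 2 ≤ s) (hk : (s : ℝ) - 1 < k) {a : ℕ}
    (ha : (a : ℝ) ≠ k) : rbinomTangent k s a < a.choose s := by
  rcases lt_or_ge a s with has | has
  · have : (a : ℝ) + 1 ≤ s := by exact_mod_cast has
    rw [Nat.choose_eq_zero_of_lt has, Nat.cast_zero]
    exact rbinomTangent_neg hs hk (by linarith)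
  · have : (s : ℝ) ≤ a := by exact_mod_cast has
    rw [← rbinom_natCast]
    exact rbinomTangent_lt_rbinom hs hk (by linarith) ha

theorem rbinomTangent_le_choose {k : ℝ} {s : ℕ} (hs : 2 ≤ s) (hk : (s : ℝ) - 1 < k) (a : ℕ) :
    rbinomTangent k s a ≤ a.choose s := by
  rcases eq_or_ne (a : ℝ) k with rfl | ha
  · rw [rbinomTangent_self, rbinom_natCast]
  · exact (rbinomTangent_lt_choose hs hk ha).le

theorem sum_card_eq_sum_card_filter_mem {X : Type*} [DecidableEq X] {G : Finset X}
    {P : Finset (Finset X)} (hP : ∀ A ∈ P, A ⊆ G) :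
    ∑ A ∈ P, #A = ∑ v ∈ G, #{A ∈ P | v ∈ A} := by
  calc ∑ A ∈ P, #A = ∑ A ∈ P, #{v ∈ G | v ∈ A} :=
        sum_congr rfl fun A hA ↦ by rw [filter_mem_eq_inter, inter_eq_right.2 (hP A hA)]
    _ = _ := (sum_card_bipartiteAbove_eq_sum_card_bipartiteBelow (r := fun v A ↦ v ∈ A)).symm

/-- Give each pair `(a, b)` with `R a b` the weights `1 / (#V * #{b | R a b})` and
`1 / (#B * #{a | R a b})`: both weightings total `1`, so the first cannot be smaller everywhere. -/
theorem exists_rel_card_mul_le {α β : Type*} {V : Finset α} {B : Finset β} (R : α → β → Prop)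
    [∀ a b, Decidable (R a b)] (hV : V.Nonempty) (hVB : ∀ a ∈ V, 0 < #{b ∈ B | R a b})
    (hBV : ∀ b ∈ B, 0 < #{a ∈ V | R a b}) :
    ∃ a ∈ V, ∃ b ∈ B, R a b ∧ #B * #{a ∈ V | R a b} ≤ #V * #{b ∈ B | R a b} := by
  by_contra! hlt
  have hB : B.Nonempty := by
    obtain ⟨a, ha⟩ := hV
    exact (card_pos.1 (hVB a ha)).mono (filter_subset _ B)
  have hrow : ∀ a ∈ V, ∑ _b ∈ B.bipartiteAbove R a, ((#V : ℝ) * #{b ∈ B | R a b})⁻¹ =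
      (#V : ℝ)⁻¹ := fun a ha ↦ by
    have := hVB a ha
    rw [sum_const, nsmul_eq_mul, bipartiteAbove]
    field_simp
  have hcol : ∀ b ∈ B, ∑ _a ∈ V.bipartiteBelow R b, ((#B : ℝ) * #{a ∈ V | R a b})⁻¹ =
      (#B : ℝ)⁻¹ := fun b hb ↦ by
    have := hBV b hb
    rw [sum_const, nsmul_eq_mul, bipartiteBelow]
    field_simp
  have key : ∑ a ∈ V, ∑ b ∈ B.bipartiteAbove R a, ((#B : ℝ) * #{a ∈ V | R a b})⁻¹ <
      ∑ a ∈ V, ∑ _b ∈ B.bipartiteAbove R a, ((#V : ℝ) * #{b ∈ B | R a b})⁻¹ := by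
    refine sum_lt_sum_of_nonempty hV fun a ha ↦
      sum_lt_sum_of_nonempty (card_pos.1 (hVB a ha)) fun b hb ↦ ?_
    rw [mem_bipartiteAbove] at hb
    have := hVB a ha
    apply inv_strictAnti₀ (by positivity)
    exact_mod_cast hlt a ha b hb.1 hb.2
  rw [sum_sum_bipartiteAbove_eq_sum_sum_bipartiteBelow, sum_congr rfl hrow,
    sum_congr rfl hcol, sum_const, sum_const, nsmul_eq_mul, nsmul_eq_mul,
    mul_inv_cancel₀ (by simpa using hB.ne_empty), mul_inv_cancel₀ (by simpa using hV.ne_empty)]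
    at key
  exact lt_irrefl 1 key

def IsCliquePartitionOn {X : Type*} (G : Finset X) (s : ℕ) (P : Finset (Finset X)) : Prop :=
  (∀ A ∈ P, A ⊆ G ∧ A ≠ G) ∧ ∀ S ⊆ G, #S = s → ∃! A, A ∈ P ∧ S ⊆ A

theorem IsCliquePartition.isCliquePartitionOn_univ {n r : ℕ} {P : Finset (Finset (Fin n))}
    (hP : IsCliquePartition n r P) : IsCliquePartitionOn univ r P :=
  ⟨fun A hA ↦ ⟨subset_univ A, hP.1 A hA⟩, fun S _ hS ↦ hP.2 S hS⟩

def link {X : Type*} [DecidableEq X] (P : Finset (Finset X)) (v : X) : Finset (Finset X) :=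
  {A ∈ P | v ∈ A}.image (·.erase v)

theorem card_link {X : Type*} [DecidableEq X] (P : Finset (Finset X)) (v : X) :
    #(link P v) = #{A ∈ P | v ∈ A} := by
  refine card_image_of_injOn fun A hA B hB hAB ↦ ?_
  rw [mem_coe, mem_filter] at hA hB
  rw [← insert_erase hA.2, ← insert_erase hB.2]
  exact congrArg (insert v) hAB

namespace IsCliquePartitionOn

variable {X : Type*} {G : Finset X} {s : ℕ} {P : Finset (Finset X)}

theorem eq_of_subset (h : IsCliquePartitionOn G s P) {S A B : Finset X} (hS : #S = s)
    (hA : A ∈ P) (hB : B ∈ P) (hSA : S ⊆ A) (hSB : S ⊆ B) : A = B :=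
  (h.2 S (hSA.trans (h.1 A hA).1) hS).unique ⟨hA, hSA⟩ ⟨hB, hSB⟩

theorem sum_choose_card [DecidableEq X] (h : IsCliquePartitionOn G s P) :
    ∑ A ∈ P, (#A).choose s = (#G).choose s := by
  have hunion : G.powersetCard s = P.biUnion (powersetCard s) := by
    ext S
    simp only [mem_powersetCard, mem_biUnion]
    constructor
    · rintro ⟨hSG, hS⟩
      obtain ⟨A, ⟨hA, hSA⟩, -⟩ := h.2 S hSG hS
      exact ⟨A, hA, hSA, hS⟩
    · rintro ⟨A, hA, hSA, hS⟩
      exact ⟨hSA.trans (h.1 A hA).1, hS⟩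
  have hdisj : (P : Set (Finset X)).PairwiseDisjoint (powersetCard s) := by
    intro A hA B hB hAB
    refine disjoint_left.2 fun S hSA hSB ↦ hAB ?_
    rw [mem_powersetCard] at hSA hSB
    exact h.eq_of_subset hSA.2 hA hB hSA.1 hSB.1
  rw [← card_powersetCard, hunion, card_biUnion hdisj]
  simp_rw [card_powersetCard]

theorem nonempty_of_le_card (h : IsCliquePartitionOn G s P) (hG : s ≤ #G) : P.Nonempty := by
  obtain ⟨S, hSG, hS⟩ := exists_subset_card_eq hG
  obtain ⟨A, ⟨hA, -⟩, -⟩ := h.2 S hSG hS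
  exact ⟨A, hA⟩

theorem link_of_mem [DecidableEq X] (h : IsCliquePartitionOn G (s + 1) P) {v : X} (hv : v ∈ G) :
    IsCliquePartitionOn (G.erase v) s (link P v) := by
  constructor
  · rintro _ hA'
    obtain ⟨A, hA, rfl⟩ := mem_image.1 hA'
    rw [mem_filter] at hA
    refine ⟨erase_subset_erase v (h.1 A hA.1).1, fun hAG ↦ (h.1 A hA.1).2 ?_⟩
    rw [← insert_erase hA.2, hAG, insert_erase hv]
  · intro S hSG hS
    have hvS : v ∉ S := fun hvS ↦ notMem_erase v G (hSG hvS)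
    obtain ⟨A, ⟨hA, hSA⟩, huniq⟩ := h.2 (insert v S)
      (insert_subset hv (hSG.trans (erase_subset v G))) (by rw [card_insert_of_notMem hvS, hS])
    have hvA : v ∈ A := hSA (mem_insert_self v S)
    refine ⟨A.erase v, ⟨mem_image_of_mem _ (mem_filter.2 ⟨hA, hvA⟩), ?_⟩, ?_⟩
    · exact subset_erase.2 ⟨(insert_subset_iff.1 hSA).2, hvS⟩
    · rintro _ ⟨hB', hSB⟩
      obtain ⟨B, hB, rfl⟩ := mem_image.1 hB'
      rw [mem_filter] at hB
      rw [huniq B ⟨hB.1, insert_subset hB.2 (hSB.trans (erase_subset v B))⟩]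

theorem exists_mem_of_pair [DecidableEq X] (h : IsCliquePartitionOn G 2 P) {a b : X}
    (ha : a ∈ G) (hb : b ∈ G) (hab : a ≠ b) : ∃ A ∈ P, a ∈ A ∧ b ∈ A := by
  obtain ⟨A, ⟨hA, habA⟩, -⟩ := h.2 {a, b} (insert_subset ha (singleton_subset_iff.2 hb))
    (card_pair hab)
  exact ⟨A, hA, habA (mem_insert_self a _), habA (mem_insert_of_mem (mem_singleton_self b))⟩

theorem eq_of_pair_mem [DecidableEq X] (h : IsCliquePartitionOn G 2 P) {a b : X} (hab : a ≠ b)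
    {A B : Finset X} (hA : A ∈ P) (hB : B ∈ P) (haA : a ∈ A) (hbA : b ∈ A) (haB : a ∈ B)
    (hbB : b ∈ B) : A = B :=
  h.eq_of_subset (card_pair hab) hA hB (insert_subset haA (singleton_subset_iff.2 hbA))
    (insert_subset haB (singleton_subset_iff.2 hbB))

theorem card_le_card_filter_mem [DecidableEq X] (h : IsCliquePartitionOn G 2 P) {v : X}
    (hv : v ∈ G) {L : Finset X} (hL : L ∈ P) (hvL : v ∉ L) : #L ≤ #{A ∈ P | v ∈ A} := by
  refine card_le_card_of_forall_subsingleton (fun u A ↦ u ∈ A) (fun u hu ↦ ?_) fun A hA ↦ ?_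
  · have huv : u ≠ v := fun huv ↦ hvL (huv ▸ hu)
    obtain ⟨A, hA, huA, hvA⟩ := h.exists_mem_of_pair ((h.1 L hL).1 hu) hv huv
    exact ⟨A, mem_filter.2 ⟨hA, hvA⟩, huA⟩
  · rintro u ⟨hu, huA⟩ u' ⟨hu', hu'A⟩
    by_contra huu'
    rw [mem_filter] at hA
    exact hvL (h.eq_of_pair_mem huu' hA.1 hL huA hu'A hu hu' ▸ hA.2)

theorem exists_notMem [DecidableEq X] (h : IsCliquePartitionOn G 2 P) {u v : X} (hu : u ∈ G)
    (hv : v ∈ G) (huv : u ≠ v) : ∃ L ∈ P, v ∉ L := by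
  obtain ⟨A, hA, huA, hvA⟩ := h.exists_mem_of_pair hu hv huv
  obtain ⟨x, hxG, hxA⟩ := exists_of_ssubset (Finset.ssubset_iff_subset_ne.2 (h.1 A hA))
  have hux : u ≠ x := fun hux ↦ hxA (hux ▸ huA)
  obtain ⟨B, hB, huB, hxB⟩ := h.exists_mem_of_pair hu hxG hux
  refine ⟨B, hB, fun hvB ↦ hxA ?_⟩
  rwa [h.eq_of_pair_mem huv hA hB huA hvA huB hvB]

/-- The de Bruijn–Erdős theorem. -/
theorem card_le_card [DecidableEq X] (h : IsCliquePartitionOn G 2 P) (hG : 2 ≤ #G) :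
    #G ≤ #P := by
  have hdeg : ∀ v ∈ G, 0 < #{A ∈ P | v ∈ A} := fun v hv ↦ by
    obtain ⟨u, hu, huv⟩ := exists_mem_ne hG v
    obtain ⟨A, hA, -, hvA⟩ := h.exists_mem_of_pair hu hv huv
    exact card_pos.2 ⟨A, mem_filter.2 ⟨hA, hvA⟩⟩
  have hmiss : ∀ v ∈ G, 0 < #{L ∈ P | v ∉ L} := fun v hv ↦ by
    obtain ⟨u, hu, huv⟩ := exists_mem_ne hG v
    obtain ⟨L, hL, hvL⟩ := h.exists_notMem hu hv huv
    exact card_pos.2 ⟨L, mem_filter.2 ⟨hL, hvL⟩⟩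
  have hout : ∀ L ∈ P, 0 < #{v ∈ G | v ∉ L} := fun L hL ↦ by
    obtain ⟨x, hxG, hxL⟩ := exists_of_ssubset (Finset.ssubset_iff_subset_ne.2 (h.1 L hL))
    exact card_pos.2 ⟨x, mem_filter.2 ⟨hxG, hxL⟩⟩
  obtain ⟨v, hv, L, hL, hvL, hcount⟩ :=
    exists_rel_card_mul_le (fun v L ↦ v ∉ L) (card_pos.1 (by omega)) hmiss hout
  have hLdeg := h.card_le_card_filter_mem hv hL hvL
  have hsplitP := card_filter_add_card_filter_not (s := P) (fun A ↦ v ∈ A)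
  have hsplitG := card_filter_add_card_filter_not (s := G) (fun u ↦ u ∈ L)
  rw [filter_mem_eq_inter, inter_eq_right.2 (h.1 L hL).1] at hsplitG
  nlinarith [hdeg v hv]

theorem mul_choose_le_of_link [DecidableEq X] {k : ℝ} (hk : 0 ≤ k)
    (h : IsCliquePartitionOn G (s + 1) P)
    (hlink : ∀ v ∈ G, ((#(G.erase v)).choose s : ℝ) ≤ #(link P v) * rbinom (k - 1) s) :
    k * (#G).choose (s + 1) ≤ rbinom k (s + 1) * ∑ A ∈ P, (#A : ℝ) := by
  have hpascal : ((#G).choose (s + 1) : ℝ) * (s + 1) = ∑ _v ∈ G, ((#G - 1).choose s : ℝ) := by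
    rw [sum_const, nsmul_eq_mul]
    cases #G with
    | zero => simp
    | succ m => rw [Nat.add_sub_cancel]; exact_mod_cast (Nat.add_one_mul_choose_eq m s).symm
  have hdeg : ∑ _v ∈ G, ((#G - 1).choose s : ℝ) ≤ (∑ A ∈ P, (#A : ℝ)) * rbinom (k - 1) s := by
    rw [← Nat.cast_sum (s := P), sum_card_eq_sum_card_filter_mem fun A hA ↦ (h.1 A hA).1,
      Nat.cast_sum, sum_mul]
    refine sum_le_sum fun v hv ↦ ?_
    simpa [card_erase_of_mem hv, card_link] using hlink v hv
  refine le_of_mul_le_mul_right ?_ (by positivity : (0 : ℝ) < s + 1)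
  calc k * (#G).choose (s + 1) * (s + 1) = k * ((#G).choose (s + 1) * (s + 1)) := by ring
    _ ≤ k * ((∑ A ∈ P, (#A : ℝ)) * rbinom (k - 1) s) := by
      rw [hpascal]; exact mul_le_mul_of_nonneg_left hdeg hk
    _ = rbinom k (s + 1) * (s + 1) * ∑ A ∈ P, (#A : ℝ) := by rw [rbinom_succ_mul]; ring
    _ = _ := by ring

theorem choose_le_of_link [DecidableEq X] {k : ℝ} (hs : 1 ≤ s) (hk : (s : ℝ) < k)
    (h : IsCliquePartitionOn G (s + 1) P)
    (hlink : ∀ v ∈ G, ((#(G.erase v)).choose s : ℝ) ≤ #(link P v) * rbinom (k - 1) s) :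
    ((#G).choose (s + 1) : ℝ) ≤ #P * rbinom k (s + 1) ∧
      (((#G).choose (s + 1) : ℝ) = #P * rbinom k (s + 1) → ∀ A ∈ P, (#A : ℝ) = k) := by
  have hk' : ((s + 1 : ℕ) : ℝ) - 1 < k := by push_cast; linarith
  set M : ℝ := ((#G).choose (s + 1) : ℝ)
  set g := rbinom k (s + 1)
  set T := rbinomLogDeriv k (s + 1)
  set S : ℝ := ∑ A ∈ P, (#A : ℝ)
  set gap : Finset X → ℝ := fun A ↦ ((#A).choose (s + 1) : ℝ) - rbinomTangent k (s + 1) #A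
  have hgap : ∀ A ∈ P, 0 ≤ gap A := fun A _ ↦
    sub_nonneg.2 (rbinomTangent_le_choose (by omega) hk' _)
  have hgap_sum : ∑ A ∈ P, gap A = M - (#P * g + g * T * (S - #P * k)) := by
    simp only [gap, sum_sub_distrib, rbinomTangent, mul_add, mul_sub, sum_add_distrib, ← mul_sum,
      sum_const, nsmul_eq_mul]
    rw [← Nat.cast_sum, h.sum_choose_card]
    ring
  have hTk : 1 < T * k := one_lt_rbinomLogDeriv_mul (by omega) hk'
  have hT : 0 < T := by nlinarith
  have hcross : T * (k * M) ≤ T * (g * S) :=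
    mul_le_mul_of_nonneg_left (h.mul_choose_le_of_link (by linarith) hlink) hT.le
  have hmain : (T * k - 1) * (M - #P * g) + ∑ A ∈ P, gap A ≤ 0 := by
    rw [hgap_sum]; linarith
  have hgap_nonneg := sum_nonneg hgap
  refine ⟨by nlinarith, fun heq A hA ↦ ?_⟩
  by_contra hAk
  have : 0 < ∑ A ∈ P, gap A :=
    sum_pos' hgap ⟨A, hA, sub_pos.2 (rbinomTangent_lt_choose (by omega) hk' hAk)⟩
  rw [heq, sub_self, mul_zero] at hmain
  linarith

theorem choose_le_card_mul_rbinom [DecidableEq X] (hs : 2 ≤ s) {q : ℝ} (hq : 0 < q)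
    (h : IsCliquePartitionOn G s P) (hG : (#G : ℝ) = q ^ 2 + q + s - 1) :
    ((#G).choose s : ℝ) ≤ #P * rbinom (q + s - 1) s := by
  induction s, hs using Nat.le_induction generalizing G P with
  | base =>
    push_cast at hG
    have hG₂ : 2 ≤ #G := by
      have : (1 : ℝ) < #G := by nlinarith
      exact_mod_cast this
    have hP : (#G : ℝ) ≤ #P := by exact_mod_cast h.card_le_card hG₂
    rw [← rbinom_natCast, rbinom_two, rbinom_two]
    push_cast
    nlinarith
  | succ s hs ih =>
    have hq' : q + ((s + 1 : ℕ) : ℝ) - 1 = q + s := by push_cast; ring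
    rw [hq']
    refine (h.choose_le_of_link (by omega) (by linarith) fun v hv ↦ ?_).1
    refine ih (h.link_of_mem hv) ?_
    rw [cast_card_erase_of_mem hv, hG]
    push_cast
    ring

theorem card_eq_of_choose_eq [DecidableEq X] (hs : 2 ≤ s) {q : ℝ} (hq : 0 < q)
    (h : IsCliquePartitionOn G (s + 1) P) (hG : (#G : ℝ) = q ^ 2 + q + s)
    (heq : ((#G).choose (s + 1) : ℝ) = #P * rbinom (q + s) (s + 1)) :
    ∀ A ∈ P, (#A : ℝ) = q + s := by
  refine (h.choose_le_of_link (by omega) (by linarith) fun v hv ↦ ?_).2 heq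
  refine (h.link_of_mem hv).choose_le_card_mul_rbinom hs hq ?_
  rw [cast_card_erase_of_mem hv, hG]

end IsCliquePartitionOn

theorem cp_equality_steiner_general (r n : ℕ) (hr : 3 ≤ r)
    (q : ℝ) (hq : 0 < q) (hnq : (n : ℝ) = q ^ 2 + q + r - 1)
    (P : Finset (Finset (Fin n))) (hP : IsCliquePartition n r P)
    (hcard : (P.card : ℝ) = rbinom (n : ℝ) r / rbinom (q + r - 1) r) :
    ∃ k : ℕ, 0 < k ∧ (k : ℝ) = q ∧ ∀ A ∈ P, A.card = k + r - 1 := by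
  obtain ⟨s, rfl⟩ : ∃ s, r = s + 1 := ⟨r - 1, by omega⟩
  have hG := hP.isCliquePartitionOn_univ
  have hn : (#(univ : Finset (Fin n)) : ℝ) = q ^ 2 + q + s := by
    rw [card_univ, Fintype.card_fin, hnq]
    push_cast
    ring
  have hq' : q + ((s + 1 : ℕ) : ℝ) - 1 = q + s := by push_cast; ring
  have hsize := hG.card_eq_of_choose_eq (by omega) hq hn <| by
    rw [hcard, hq', div_mul_cancel₀ _ (rbinom_pos (by push_cast; linarith)).ne', card_univ,
      Fintype.card_fin, rbinom_natCast]
  obtain ⟨A, hA⟩ := hG.nonempty_of_le_card <| by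
    have : (s : ℝ) < #(univ : Finset (Fin n)) := by nlinarith
    exact_mod_cast this
  have hA' : s < #A := by exact_mod_cast (show (s : ℝ) < #A by linarith [hsize A hA])
  refine ⟨#A - s, by omega, ?_, fun B hB ↦ ?_⟩
  · rw [Nat.cast_sub hA'.le, hsize A hA]
    ring
  · have : #B = #A := by exact_mod_cast (hsize B hB).trans (hsize A hA).symm
    omega

/-- for `r ≥ 3`, `n > r + 1`, `q > 0` real with `n = q² + q + r - 1`,
any clique partition `P` with `|P| = C(n,r)/C(q+r-1,r)` forces `q` to be a
positive integer and each member of `P` to have exactly `q + r - 1` elements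
(so `P` is a Steiner `(n, q+r-1, r)`-system). -/
theorem cp_equality_steiner (r n : ℕ) (hr : 3 ≤ r) (hn : r + 1 < n)
    (q : ℝ) (hq : 0 < q) (hnq : (n : ℝ) = q ^ 2 + q + r - 1)
    (P : Finset (Finset (Fin n))) (hP : IsCliquePartition n r P)
    (hcard : (P.card : ℝ) = rbinom (n : ℝ) r / rbinom (q + r - 1) r) :
    ∃ k : ℕ, 0 < k ∧ (k : ℝ) = q ∧ ∀ A ∈ P, A.card = k + r - 1 :=
  cp_equality_steiner_general r n hr q hq hnq P hP hcard
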